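/- hm(c_min) ≤ Cov(Lip(ℝ)), i.e., the homogeneity number of c_min is at most the least cardinality of a family F of Lipschitz functions from ℝ to ℝ (each Lipschitz with some constant) such that for every (x,y) ∈ ℝ × ℝ there is f ∈ F with f(x) = y or f(y) = x. -/

import Mathlib

open Cardinal Topology

/-- The least index where two sequences differ. -/
noncomputable def Delta {α : Type*} (x y : ℕ → α) : ℕ := sInf {n | x n ≠ y n}

/-- A set is homogeneous for a pair-coloring `c` if `c` is constant on pairs of
distinct elements of the set. -/
def IsHomog {X : Type*} (c : X → X → Fin 2) (H : Set X) : Prop :=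
  ∃ i : Fin 2, ∀ x ∈ H, ∀ y ∈ H, x ≠ y → c x y = i

/-- The homogeneity number of a pair-coloring: the least cardinality of a family of
homogeneous sets covering the space. -/
noncomputable def hm {X : Type*} (c : X → X → Fin 2) : Cardinal :=
  sInf { κ | ∃ F : Set (Set X), #F = κ ∧ (∀ H ∈ F, IsHomog c H) ∧ ⋃₀ F = Set.univ }

/-- The homogeneity number of the restriction of a coloring to a subset. -/
noncomputable def hmOn {X : Type*} (c : X → X → Fin 2) (Y : Set X) : Cardinal :=
  sInf { κ | ∃ F : Set (Set X), #F = κ ∧ (∀ H ∈ F, H ⊆ Y ∧ IsHomog c H) ∧ ⋃₀ F = Y }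

/-- A pair-coloring is continuous if it is continuous on `X × X` minus the diagonal. -/
def ContColoring {X : Type*} [TopologicalSpace X] (c : X → X → Fin 2) : Prop :=
  Continuous fun p : {q : X × X // q.1 ≠ q.2} => c p.val.1 p.val.2

/-- Symmetry of a pair-coloring on distinct points. -/
def SymmColoring {X : Type*} (c : X → X → Fin 2) : Prop :=
  ∀ x y : X, x ≠ y → c x y = c y x

/-- A continuous pair-coloring is reduced if no nonempty open set is homogeneous. -/
def Reduced {X : Type*} [TopologicalSpace X] (c : X → X → Fin 2) : Prop :=
  ContColoring c ∧ ∀ U : Set X, IsOpen U → U.Nonempty → ¬ IsHomog c U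

/-- The coloring `c_min` on the Cantor space: the parity of the first difference. -/
noncomputable def cmin : (ℕ → Bool) → (ℕ → Bool) → Fin 2 :=
  fun x y => if Even (Delta x y) then 0 else 1

/-- The coloring `c_parity` on the Baire space: the parity of the first difference. -/
noncomputable def cparity : (ℕ → ℕ) → (ℕ → ℕ) → Fin 2 :=
  fun x y => if Even (Delta x y) then 0 else 1

/-!
Split `z ∈ 2^ℕ` into its even and odd halves and send each half into `ℝ` by a Cantor-type
embedding `a ↦ ∑ 2 a(n) 3^(-γ n)`, with scales `γ n = (n+1)^2` for the even half and
`γ n = (n+1)(n+2)` for the odd half. Points with first difference `d` are at distance about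
`3^(-γ d)`. Let `f` be `K`-Lipschitz with `K < 3^m`, mapping one half of `z` to the other half, and
likewise for `z'`, where the source halves of `z` and `z'` share their first `m` digits. Since the
gaps between the interleaved scales outgrow `m`, the target halves first differ no earlier than
the source halves (even to odd), resp. strictly later (odd to even), so `Δ(z, z')` is even, resp.
odd. Each `f` yields countably many such homogeneous pieces, and a covering family of functions
is infinite, so `hm c_min ≤ #F`.
-/

open PiNat

-- Both conventions give `0` on the diagonal (`sInf ∅ = 0`).
lemma delta_eq_firstDiff {α : Type*} (x y : ℕ → α) : Delta x y = firstDiff x y := by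
  by_cases hxy : x = y
  · subst hxy
    simp [Delta, firstDiff_def]
  · refine le_antisymm (Nat.sInf_le (apply_firstDiff_ne hxy)) (not_lt.1 fun hlt => ?_)
    exact Nat.sInf_mem (Function.ne_iff.1 hxy) (apply_eq_of_lt_firstDiff hlt)

lemma firstDiff_eq_of_apply_ne {α : Type*} {x y : ℕ → α} {n : ℕ} (hn : x n ≠ y n)
    (hlt : ∀ k < n, x k = y k) : firstDiff x y = n := by
  have hxy : x ≠ y := fun h => hn (congrFun h n)
  refine le_antisymm (not_lt.1 fun h => hn (apply_eq_of_lt_firstDiff h)) (not_lt.1 fun h => ?_)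
  exact apply_firstDiff_ne hxy (hlt _ h)

def evenPart {α : Type*} (z : ℕ → α) (n : ℕ) : α := z (2 * n)

def oddPart {α : Type*} (z : ℕ → α) (n : ℕ) : α := z (2 * n + 1)

section Interleave

variable {α : Type*} {z z' : ℕ → α}

lemma eq_of_evenPart_eq_of_oddPart_eq (hev : evenPart z = evenPart z')
    (hod : oddPart z = oddPart z') : z = z' := by
  funext n
  obtain ⟨k, rfl | rfl⟩ := Nat.even_or_odd' n
  · exact congrFun hev k
  · exact congrFun hod k

lemma firstDiff_eq_two_mul (hev : evenPart z ≠ evenPart z')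
    (hod : ∀ k < firstDiff (evenPart z) (evenPart z'), oddPart z k = oddPart z' k) :
    firstDiff z z' = 2 * firstDiff (evenPart z) (evenPart z') := by
  refine firstDiff_eq_of_apply_ne (apply_firstDiff_ne hev) fun k hk => ?_
  obtain ⟨j, rfl | rfl⟩ := Nat.even_or_odd' k
  · exact apply_eq_of_lt_firstDiff (x := evenPart z) (y := evenPart z') (by omega)
  · exact hod j (by omega)

lemma firstDiff_eq_two_mul_add_one (hod : oddPart z ≠ oddPart z')
    (hev : ∀ k ≤ firstDiff (oddPart z) (oddPart z'), evenPart z k = evenPart z' k) :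
    firstDiff z z' = 2 * firstDiff (oddPart z) (oddPart z') + 1 := by
  refine firstDiff_eq_of_apply_ne (apply_firstDiff_ne hod) fun k hk => ?_
  obtain ⟨j, rfl | rfl⟩ := Nat.even_or_odd' k
  · exact hev j (by omega)
  · exact apply_eq_of_lt_firstDiff (x := oddPart z) (y := oddPart z') (by omega)

end Interleave

noncomputable def cantorEmbed (γ : ℕ → ℕ) (a : ℕ → Bool) : ℝ :=
  ∑' n, (if a n then 2 else 0) * (3 : ℝ)⁻¹ ^ γ n

section CantorEmbed

variable {γ : ℕ → ℕ}

lemma norm_le_geometric_of_strictMono (hγ : StrictMono γ) (d : ℕ) {u : ℕ → ℝ}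
    (hu : ∀ n, |u n| ≤ 2 * (3 : ℝ)⁻¹ ^ γ (n + d)) (n : ℕ) :
    ‖u n‖ ≤ 2 * (3 : ℝ)⁻¹ ^ γ d * (3 : ℝ)⁻¹ ^ n :=
  calc ‖u n‖ ≤ 2 * (3 : ℝ)⁻¹ ^ γ (n + d) := hu n
    _ ≤ 2 * (3 : ℝ)⁻¹ ^ (n + γ d) := by
        gcongr 2 * ?_
        exact pow_le_pow_of_le_one (by norm_num) (by norm_num) (hγ.add_le_nat n d)
    _ = 2 * (3 : ℝ)⁻¹ ^ γ d * (3 : ℝ)⁻¹ ^ n := by ring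

lemma summable_of_strictMono (hγ : StrictMono γ) (d : ℕ) {u : ℕ → ℝ}
    (hu : ∀ n, |u n| ≤ 2 * (3 : ℝ)⁻¹ ^ γ (n + d)) : Summable u :=
  .of_norm_bounded ((summable_geometric_of_lt_one (by norm_num) (by norm_num)).mul_left _)
    (norm_le_geometric_of_strictMono hγ d hu)

lemma abs_tsum_le_of_strictMono (hγ : StrictMono γ) (d : ℕ) {u : ℕ → ℝ}
    (hu : ∀ n, |u n| ≤ 2 * (3 : ℝ)⁻¹ ^ γ (n + d)) :
    |∑' n, u n| ≤ 3 * (3 : ℝ)⁻¹ ^ γ d :=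
  calc |∑' n, u n| ≤ 2 * (3 : ℝ)⁻¹ ^ γ d * (1 - 3⁻¹)⁻¹ :=
        tsum_of_norm_bounded
          ((hasSum_geometric_of_lt_one (by norm_num) (by norm_num)).mul_left _)
          (norm_le_geometric_of_strictMono hγ d hu)
    _ = 3 * (3 : ℝ)⁻¹ ^ γ d := by norm_num; ring

lemma abs_digit_mul_le (p : Bool) (k : ℕ) :
    |(if p then 2 else 0) * (3 : ℝ)⁻¹ ^ k| ≤ 2 * (3 : ℝ)⁻¹ ^ k := by
  rw [abs_mul, abs_of_pos (by positivity : (0 : ℝ) < 3⁻¹ ^ k)]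
  gcongr
  cases p <;> norm_num

lemma abs_digit_sub_mul_le (p q : Bool) (k : ℕ) :
    |((if p then 2 else 0) - (if q then 2 else 0)) * (3 : ℝ)⁻¹ ^ k| ≤
      2 * (3 : ℝ)⁻¹ ^ k := by
  rw [abs_mul, abs_of_pos (by positivity : (0 : ℝ) < 3⁻¹ ^ k)]
  gcongr
  cases p <;> cases q <;> norm_num

lemma cantorEmbed_sub_eq_tsum (hγ : StrictMono γ) (a b : ℕ → Bool) :
    cantorEmbed γ a - cantorEmbed γ b = ∑' n,
      ((if a (n + firstDiff a b) then 2 else 0) - (if b (n + firstDiff a b) then 2 else 0)) *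
        (3 : ℝ)⁻¹ ^ γ (n + firstDiff a b) := by
  set D : ℕ → ℝ := fun n => ((if a n then 2 else 0) - (if b n then 2 else 0)) * 3⁻¹ ^ γ n
  have hsummable (x : ℕ → Bool) :
      Summable fun n => (if x n then 2 else 0) * (3 : ℝ)⁻¹ ^ γ n :=
    summable_of_strictMono hγ 0 fun n => abs_digit_mul_le _ _
  have hsub : cantorEmbed γ a - cantorEmbed γ b = ∑' n, D n := by
    rw [cantorEmbed, cantorEmbed, ← (hsummable a).tsum_sub (hsummable b)]
    simp only [D, sub_mul]
  have hhead : ∑ n ∈ Finset.range (firstDiff a b), D n = 0 :=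
    Finset.sum_eq_zero fun n hn => by
      simp [D, apply_eq_of_lt_firstDiff (Finset.mem_range.1 hn)]
  have hD : Summable D := summable_of_strictMono hγ 0 fun n => abs_digit_sub_mul_le _ _ _
  rw [hsub, ← hD.sum_add_tsum_nat_add (firstDiff a b), hhead, zero_add]

lemma abs_cantorEmbed_sub_le (hγ : StrictMono γ) (a b : ℕ → Bool) :
    |cantorEmbed γ a - cantorEmbed γ b| ≤ 3 * (3 : ℝ)⁻¹ ^ γ (firstDiff a b) := by
  rw [cantorEmbed_sub_eq_tsum hγ]
  exact abs_tsum_le_of_strictMono hγ _ fun n => abs_digit_sub_mul_le _ _ _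

lemma le_abs_cantorEmbed_sub (hγ : StrictMono γ) {a b : ℕ → Bool} (hab : a ≠ b) :
    (3 : ℝ)⁻¹ ^ γ (firstDiff a b) ≤ |cantorEmbed γ a - cantorEmbed γ b| := by
  set d := firstDiff a b
  set u : ℕ → ℝ := fun n =>
    ((if a (n + d) then 2 else 0) - (if b (n + d) then 2 else 0)) * 3⁻¹ ^ γ (n + d)
  have hu : ∀ n, |u n| ≤ 2 * (3 : ℝ)⁻¹ ^ γ (n + d) := fun n => abs_digit_sub_mul_le _ _ _
  have hfirst : |u 0| = 2 * (3 : ℝ)⁻¹ ^ γ d := by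
    have hne := apply_firstDiff_ne hab
    simp only [u, zero_add, abs_mul, abs_of_pos (by positivity : (0 : ℝ) < 3⁻¹ ^ γ d)]
    cases ha : a d <;> cases hb : b d <;> simp_all [d]
  have htail : |∑' n, u (n + 1)| ≤ (3 : ℝ)⁻¹ ^ γ d :=
    calc |∑' n, u (n + 1)| ≤ 3 * (3 : ℝ)⁻¹ ^ γ (d + 1) :=
          abs_tsum_le_of_strictMono hγ (d + 1) fun n => by
            simpa [add_assoc, add_comm 1] using hu (n + 1)
      _ ≤ 3 * (3 : ℝ)⁻¹ ^ (γ d + 1) := by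
          gcongr 3 * ?_
          exact pow_le_pow_of_le_one (by norm_num) (by norm_num) (hγ (Nat.lt_succ_self d))
      _ = (3 : ℝ)⁻¹ ^ γ d := by rw [pow_succ]; field_simp
  rw [cantorEmbed_sub_eq_tsum hγ, (summable_of_strictMono hγ d hu).tsum_eq_zero_add]
  calc (3 : ℝ)⁻¹ ^ γ d = |u 0| - (3 : ℝ)⁻¹ ^ γ d := by rw [hfirst]; ring
    _ ≤ |u 0| - |∑' n, u (n + 1)| := by linarith
    _ ≤ |u 0 + ∑' n, u (n + 1)| := abs_sub_abs_le_abs_add _ _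

lemma cantorEmbed_injective (hγ : StrictMono γ) : Function.Injective (cantorEmbed γ) := by
  intro a b hab
  by_contra hne
  have := le_abs_cantorEmbed_sub hγ hne
  rw [hab, sub_self, abs_zero] at this
  exact (pow_pos (by norm_num) _).not_ge this

end CantorEmbed

lemma lt_of_lipschitz_cantorEmbed {γ δ : ℕ → ℕ} (hγ : StrictMono γ) (hδ : StrictMono δ)
    {K : NNReal} {f : ℝ → ℝ} (hf : LipschitzWith K f) {t : ℕ} (hK : (K : ℝ) < 3 ^ t)
    {a a' b b' : ℕ → Bool} (h : f (cantorEmbed γ a) = cantorEmbed δ b)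
    (h' : f (cantorEmbed γ a') = cantorEmbed δ b') (hb : b ≠ b') :
    γ (firstDiff a a') < δ (firstDiff b b') + t + 1 := by
  have key :
      (3 : ℝ)⁻¹ ^ δ (firstDiff b b') < 3 ^ (t + 1) * (3 : ℝ)⁻¹ ^ γ (firstDiff a a') :=
    calc (3 : ℝ)⁻¹ ^ δ (firstDiff b b') ≤ |cantorEmbed δ b - cantorEmbed δ b'| :=
          le_abs_cantorEmbed_sub hδ hb
      _ = dist (f (cantorEmbed γ a)) (f (cantorEmbed γ a')) := by rw [h, h', Real.dist_eq]
      _ ≤ K * dist (cantorEmbed γ a) (cantorEmbed γ a') := hf.dist_le_mul _ _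
      _ ≤ K * (3 * (3 : ℝ)⁻¹ ^ γ (firstDiff a a')) := by
          rw [Real.dist_eq]
          gcongr
          exact abs_cantorEmbed_sub_le hγ a a'
      _ < 3 ^ t * (3 * (3 : ℝ)⁻¹ ^ γ (firstDiff a a')) := by gcongr
      _ = 3 ^ (t + 1) * (3 : ℝ)⁻¹ ^ γ (firstDiff a a') := by ring
  rw [inv_pow, inv_pow] at key
  field_simp at key
  rw [← pow_add, ← add_assoc] at key
  exact (pow_lt_pow_iff_right₀ (by norm_num : (1 : ℝ) < 3)).1 key

-- `oddScale n = evenScale n + (n + 1)` and `evenScale (n + 1) = oddScale n + (n + 2)`: the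
-- gaps between the interleaved scales eventually exceed the exponent of any Lipschitz constant.
def evenScale (n : ℕ) : ℕ := (n + 1) ^ 2

def oddScale (n : ℕ) : ℕ := (n + 1) * (n + 2)

lemma evenScale_strictMono : StrictMono evenScale :=
  strictMono_nat_of_lt_succ fun n => Nat.pow_lt_pow_left (by omega) two_ne_zero

lemma oddScale_strictMono : StrictMono oddScale :=
  strictMono_nat_of_lt_succ fun n => Nat.mul_lt_mul'' (by omega) (by omega)

lemma firstDiff_le_of_lipschitz {K : NNReal} {f : ℝ → ℝ} (hf : LipschitzWith K f)
    {a a' b b' : ℕ → Bool} (hK : (K : ℝ) < 3 ^ firstDiff a a')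
    (h : f (cantorEmbed evenScale a) = cantorEmbed oddScale b)
    (h' : f (cantorEmbed evenScale a') = cantorEmbed oddScale b') (hb : b ≠ b') :
    firstDiff a a' ≤ firstDiff b b' := by
  have := lt_of_lipschitz_cantorEmbed evenScale_strictMono oddScale_strictMono hf hK h h' hb
  unfold evenScale oddScale at this
  by_contra! hlt
  nlinarith

lemma firstDiff_lt_of_lipschitz {K : NNReal} {f : ℝ → ℝ} (hf : LipschitzWith K f)
    {a a' b b' : ℕ → Bool} (hK : (K : ℝ) < 3 ^ firstDiff b b')
    (h : f (cantorEmbed oddScale b) = cantorEmbed evenScale a)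
    (h' : f (cantorEmbed oddScale b') = cantorEmbed evenScale a') (ha : a ≠ a') :
    firstDiff b b' < firstDiff a a' := by
  have := lt_of_lipschitz_cantorEmbed oddScale_strictMono evenScale_strictMono hf hK h h' ha
  unfold evenScale oddScale at this
  by_contra! hle
  nlinarith

lemma le_firstDiff_of_res_eq {α : Type*} {x y : ℕ → α} {n : ℕ} (hxy : x ≠ y)
    (h : res x n = res y n) : n ≤ firstDiff x y :=
  not_lt.1 fun hlt => apply_firstDiff_ne hxy (res_eq_res.1 h hlt)

def evenPiece (f : ℝ → ℝ) (l : List Bool) : Set (ℕ → Bool) :=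
  {z | (∃ K : NNReal, LipschitzWith K f ∧ (K : ℝ) < 3 ^ l.length) ∧
    res (evenPart z) l.length = l ∧
    f (cantorEmbed evenScale (evenPart z)) = cantorEmbed oddScale (oddPart z)}

def oddPiece (f : ℝ → ℝ) (l : List Bool) : Set (ℕ → Bool) :=
  {z | (∃ K : NNReal, LipschitzWith K f ∧ (K : ℝ) < 3 ^ l.length) ∧
    res (oddPart z) l.length = l ∧
    f (cantorEmbed oddScale (oddPart z)) = cantorEmbed evenScale (evenPart z)}

lemma isHomog_evenPiece (f : ℝ → ℝ) (l : List Bool) : IsHomog cmin (evenPiece f l) := by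
  refine ⟨0, ?_⟩
  rintro z ⟨⟨K, hf, hK⟩, hres, heq⟩ z' ⟨-, hres', heq'⟩ hne
  have hev : evenPart z ≠ evenPart z' := fun h => hne <| eq_of_evenPart_eq_of_oddPart_eq h <|
    cantorEmbed_injective oddScale_strictMono (by rw [← heq, ← heq', h])
  have hlen : l.length ≤ firstDiff (evenPart z) (evenPart z') :=
    le_firstDiff_of_res_eq hev (hres.trans hres'.symm)
  have hod : ∀ k < firstDiff (evenPart z) (evenPart z'), oddPart z k = oddPart z' k := by
    by_cases hb : oddPart z = oddPart z'
    · simp [hb]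
    · have hK' := hK.trans_le (pow_le_pow_right₀ (by norm_num) hlen)
      exact fun k hk =>
        apply_eq_of_lt_firstDiff (hk.trans_le (firstDiff_le_of_lipschitz hf hK' heq heq' hb))
  simp [cmin, delta_eq_firstDiff, firstDiff_eq_two_mul hev hod]

lemma isHomog_oddPiece (f : ℝ → ℝ) (l : List Bool) : IsHomog cmin (oddPiece f l) := by
  refine ⟨1, ?_⟩
  rintro z ⟨⟨K, hf, hK⟩, hres, heq⟩ z' ⟨-, hres', heq'⟩ hne
  have hod : oddPart z ≠ oddPart z' := fun h => hne <| eq_of_evenPart_eq_of_oddPart_eq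
    (cantorEmbed_injective evenScale_strictMono (by rw [← heq, ← heq', h])) h
  have hlen : l.length ≤ firstDiff (oddPart z) (oddPart z') :=
    le_firstDiff_of_res_eq hod (hres.trans hres'.symm)
  have hev : ∀ k ≤ firstDiff (oddPart z) (oddPart z'), evenPart z k = evenPart z' k := by
    by_cases ha : evenPart z = evenPart z'
    · simp [ha]
    · have hK' := hK.trans_le (pow_le_pow_right₀ (by norm_num) hlen)
      exact fun k hk =>
        apply_eq_of_lt_firstDiff (hk.trans_lt (firstDiff_lt_of_lipschitz hf hK' heq heq' ha))
  simp [cmin, delta_eq_firstDiff, firstDiff_eq_two_mul_add_one hod hev]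

lemma exists_mem_evenPiece_union_oddPiece {K : NNReal} {f : ℝ → ℝ} (hf : LipschitzWith K f)
    {z : ℕ → Bool}
    (hz : f (cantorEmbed evenScale (evenPart z)) = cantorEmbed oddScale (oddPart z) ∨
      f (cantorEmbed oddScale (oddPart z)) = cantorEmbed evenScale (evenPart z)) :
    ∃ l, z ∈ evenPiece f l ∪ oddPiece f l := by
  obtain ⟨m, hm⟩ := pow_unbounded_of_one_lt (K : ℝ) (by norm_num : (1 : ℝ) < 3)
  rcases hz with hz | hz
  · exact ⟨res (evenPart z) m, Or.inl ⟨⟨K, hf, by simpa using hm⟩, by simp, hz⟩⟩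
  · exact ⟨res (oddPart z) m, Or.inr ⟨⟨K, hf, by simpa using hm⟩, by simp, hz⟩⟩

lemma infinite_of_forall_apply_eq_or_apply_eq {F : Set (ℝ → ℝ)}
    (hcov : ∀ x y : ℝ, ∃ f ∈ F, f x = y ∨ f y = x) : F.Infinite := by
  intro hfin
  obtain ⟨y, hy⟩ : ∃ y : ℝ, y ∉ ⋃ f ∈ F, Set.range fun n : ℕ => f n := by
    by_contra! h
    exact Set.not_countable_univ
      ((hfin.countable.biUnion fun f _ => Set.countable_range _).mono fun y _ => h y)
  choose g hgF hg using fun n : ℕ => hcov n y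
  have hgy : ∀ n, g n y = n := fun n =>
    (hg n).resolve_left fun h => hy (Set.mem_biUnion (hgF n) ⟨n, h⟩)
  refine Set.infinite_of_injective_forall_mem (fun m n hmn => ?_) hgF hfin
  exact_mod_cast (hgy m).symm.trans ((congrFun hmn y).trans (hgy n))

lemma hm_cmin_le_mk {F : Set (ℝ → ℝ)} (hLip : ∀ f ∈ F, ∃ K : NNReal, LipschitzWith K f)
    (hcov : ∀ x y : ℝ, ∃ f ∈ F, f x = y ∨ f y = x) : hm cmin ≤ #F := by
  have : Infinite F := (infinite_of_forall_apply_eq_or_apply_eq hcov).to_subtype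
  let G := Set.range (fun p : F × List Bool => evenPiece p.1 p.2) ∪
    Set.range (fun p : F × List Bool => oddPiece p.1 p.2)
  have hG : ∀ H ∈ G, IsHomog cmin H := by
    rintro H (⟨p, rfl⟩ | ⟨p, rfl⟩)
    exacts [isHomog_evenPiece _ _, isHomog_oddPiece _ _]
  have hcover : ⋃₀ G = Set.univ := Set.eq_univ_of_forall fun z => by
    obtain ⟨f, hfF, hfz⟩ :=
      hcov (cantorEmbed evenScale (evenPart z)) (cantorEmbed oddScale (oddPart z))
    obtain ⟨K, hK⟩ := hLip f hfF
    obtain ⟨l, hl | hl⟩ := exists_mem_evenPiece_union_oddPiece hK hfz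
    · exact ⟨_, Or.inl ⟨(⟨f, hfF⟩, l), rfl⟩, hl⟩
    · exact ⟨_, Or.inr ⟨(⟨f, hfF⟩, l), rfl⟩, hl⟩
  have hprod : #(F × List Bool) = #F := by
    rw [mk_prod, lift_id, lift_id, mk_list_eq_aleph0, mul_aleph0_eq (aleph0_le_mk F)]
  calc hm cmin ≤ #G := csInf_le' ⟨G, rfl, hG, hcover⟩
    _ ≤ #(F × List Bool) + #(F × List Bool) :=
        (mk_union_le _ _).trans (add_le_add mk_range_le mk_range_le)
    _ = #F := by rw [hprod, add_eq_self (aleph0_le_mk F)]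

/-- `hm(c_min) ≤ Cov(Lip(ℝ))`: the homogeneity number of `c_min` is at most the least
cardinality of a family of Lipschitz real functions covering `ℝ × ℝ` (where `f` covers
`(x, y)` iff `f x = y` or `f y = x`). -/
theorem stmt16 :
    hm cmin ≤ sInf {μ : Cardinal | ∃ F : Set (ℝ → ℝ),
      #F = μ ∧ (∀ f ∈ F, ∃ K : NNReal, LipschitzWith K f) ∧
      ∀ x y : ℝ, ∃ f ∈ F, f x = y ∨ f y = x} := by
  refine le_csInf ⟨_, Set.range fun c : ℝ => fun _ => c, rfl, ?_, ?_⟩ ?_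
  · rintro _ ⟨c, rfl⟩
    exact ⟨0, LipschitzWith.const c⟩
  · exact fun _ y => ⟨fun _ => y, ⟨y, rfl⟩, Or.inl rfl⟩
  · rintro _ ⟨F, rfl, hLip, hcov⟩
    exact hm_cmin_le_mk hLip hcov
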